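/- arXiv:2210.10186 — 3 statements merged into one kernel-verified Lean document; each statement's English description precedes it below -/
import Mathlib

section
/- Let p^0_{x_0}, p^0_{y_0}, q^0_{x_1}, q^0_{y_1} ∈ [0,1]. There exists t ∈ [0,1] with max{|p^0_{x_0}+p^0_{y_0}−1|, |q^0_{x_1}+q^0_{y_1}−1|} ≤ t ≤ min{1−|p^0_{x_0}−p^0_{y_0}|, 1−|q^0_{x_1}−q^0_{y_1}|} if and only if the four CHSH-type inequalities hold, namely 0 ≤ p^0_{x_0}+p^0_{y_0}+q^0_{x_1}−q^0_{y_1} ≤ 2 and the three others obtained by moving the single minus sign to another position. -/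
/-- For `a,b,c,d ∈ [0,1]`, the existence of a common marginal `t` with
`max(|a+b−1|, |c+d−1|) ≤ t ≤ min(1−|a−b|, 1−|c−d|)` is equivalent to the four
CHSH inequalities `0 ≤ ±a±b±c±d ≤ 2` (one minus sign). -/
theorem stmt7 (a b c d : ℝ) (ha : a ∈ Set.Icc (0 : ℝ) 1) (hb : b ∈ Set.Icc (0 : ℝ) 1)
    (hc : c ∈ Set.Icc (0 : ℝ) 1) (hd : d ∈ Set.Icc (0 : ℝ) 1) :
    (∃ t : ℝ, max |a + b - 1| |c + d - 1| ≤ t ∧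
        t ≤ min (1 - |a - b|) (1 - |c - d|)) ↔
      ((0 ≤ a + b + c - d ∧ a + b + c - d ≤ 2) ∧
       (0 ≤ a + b - c + d ∧ a + b - c + d ≤ 2) ∧
       (0 ≤ a - b + c + d ∧ a - b + c + d ≤ 2) ∧
       (0 ≤ -a + b + c + d ∧ -a + b + c + d ≤ 2)) := by
  obtain ⟨ha0, ha1⟩ := ha
  obtain ⟨hb0, hb1⟩ := hb
  obtain ⟨hc0, hc1⟩ := hc
  obtain ⟨hd0, hd1⟩ := hd
  constructor
  · rintro ⟨t, h1, h2⟩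
    have h3 : max |a + b - 1| |c + d - 1| ≤ min (1 - |a - b|) (1 - |c - d|) :=
      le_trans h1 h2
    rw [max_le_iff, le_min_iff, le_min_iff] at h3
    obtain ⟨⟨h4, h5⟩, h6, h7⟩ := h3
    rcases abs_cases (a + b - 1) with ⟨e1, _⟩ | ⟨e1, _⟩ <;>
    rcases abs_cases (c + d - 1) with ⟨e2, _⟩ | ⟨e2, _⟩ <;>
    rcases abs_cases (a - b) with ⟨e3, _⟩ | ⟨e3, _⟩ <;>
    rcases abs_cases (c - d) with ⟨e4, _⟩ | ⟨e4, _⟩ <;>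
    refine ⟨⟨by linarith, by linarith⟩, ⟨by linarith, by linarith⟩,
      ⟨by linarith, by linarith⟩, by linarith, by linarith⟩
  · rintro ⟨⟨h1, h2⟩, ⟨h3, h4⟩, ⟨h5, h6⟩, h7, h8⟩
    refine ⟨max |a + b - 1| |c + d - 1|, le_refl _, ?_⟩
    rw [max_le_iff, le_min_iff, le_min_iff]
    rcases abs_cases (a + b - 1) with ⟨e1, _⟩ | ⟨e1, _⟩ <;>
    rcases abs_cases (c + d - 1) with ⟨e2, _⟩ | ⟨e2, _⟩ <;>
    rcases abs_cases (a - b) with ⟨e3, _⟩ | ⟨e3, _⟩ <;>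
    rcases abs_cases (c - d) with ⟨e4, _⟩ | ⟨e4, _⟩ <;>
    refine ⟨⟨by linarith, by linarith⟩, by linarith, by linarith⟩
end

section
/- The deterministic vertices of the Mermin polytope MP_0 number exactly 16: they are in bijection with group homomorphisms s : M → ℤ_2, where M ≅ ℤ_2^2 × ℤ_2^2 restricted to nonlocal points; equivalently, each such assignment is determined freely by its values on the four generators m_{00}, m_{01}, m_{10}, m_{11}. -/
/-- Functions on the Mermin square summing to 0 over each row and column (β = 0). -/
def merminAssignments0 : Set (Fin 3 × Fin 3 → ZMod 2) :=
  {s | (∀ i : Fin 3, s (i, 0) + s (i, 1) + s (i, 2) = 0) ∧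
       (∀ j : Fin 3, s (0, j) + s (1, j) + s (2, j) = 0)}

/-- Extension of four free values to a full Mermin assignment. -/
def merminExt (a b c d : ZMod 2) : Fin 3 × Fin 3 → ZMod 2 := fun p =>
  ![![a, b, a + b], ![c, d, c + d], ![a + c, b + d, a + b + c + d]] p.1 p.2

lemma zmod2_third (x y z : ZMod 2) (h : x + y + z = 0) : z = x + y := by
  revert h; revert x y z; decide

lemma merminExt_mem (a b c d : ZMod 2) : merminExt a b c d ∈ merminAssignments0 := by
  have hx : ∀ x : ZMod 2, x + x = 0 := by decide
  constructor <;> intro i <;> fin_cases i <;>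
    simp [merminExt, Matrix.cons_val_zero, Matrix.cons_val_one] <;> ring_nf <;>
    exact hx _

lemma mem_eq_ext {s : Fin 3 × Fin 3 → ZMod 2} (hs : s ∈ merminAssignments0) :
    s = merminExt (s (0, 0)) (s (0, 1)) (s (1, 0)) (s (1, 1)) := by
  obtain ⟨hr, hc⟩ := hs
  have h02 := zmod2_third _ _ _ (hr 0)
  have h12 := zmod2_third _ _ _ (hr 1)
  have h20 := zmod2_third _ _ _ (hc 0)
  have h21 := zmod2_third _ _ _ (hc 1)
  have h22 := zmod2_third _ _ _ (hc 2)
  funext p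
  fin_cases p <;>
    simp only [merminExt, Matrix.cons_val_zero, Matrix.cons_val_one, Matrix.head_cons,
      Matrix.cons_val_two, Matrix.tail_cons] <;>
    first
      | rfl
      | exact h02
      | exact h12
      | exact h20
      | exact h21
      | exact (show s (2, 2) = s (0, 0) + s (0, 1) + s (1, 0) + s (1, 1) by
          rw [h22, h02, h12]; ring)

/-- There are exactly 16 deterministic vertices of MP₀, i.e. outcome
assignments for β = 0; each is uniquely and freely determined by its values on
m₀₀, m₀₁, m₁₀, m₁₁ (the restriction map is a bijection onto (ℤ₂)⁴). -/
theorem stmt11 :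
    Set.ncard merminAssignments0 = 16 ∧
    Set.BijOn (fun s : Fin 3 × Fin 3 → ZMod 2 =>
        (s (0, 0), s (0, 1), s (1, 0), s (1, 1)))
      merminAssignments0 Set.univ := by
  have hval : ∀ a b c d : ZMod 2,
      (merminExt a b c d (0, 0), merminExt a b c d (0, 1),
       merminExt a b c d (1, 0), merminExt a b c d (1, 1)) = (a, b, c, d) := by
    intro a b c d; rfl
  have hbij : Set.BijOn (fun s : Fin 3 × Fin 3 → ZMod 2 =>
        (s (0, 0), s (0, 1), s (1, 0), s (1, 1)))
      merminAssignments0 Set.univ := by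
    refine ⟨fun s _ => Set.mem_univ _, ?_, ?_⟩
    · intro s hs t ht h
      rw [mem_eq_ext hs, mem_eq_ext ht]
      simp only [Prod.mk.injEq] at h
      obtain ⟨h1, h2, h3, h4⟩ := h
      rw [h1, h2, h3, h4]
    · rintro ⟨a, b, c, d⟩ -
      exact ⟨merminExt a b c d, merminExt_mem a b c d, hval a b c d⟩
  refine ⟨?_, hbij⟩
  have := Set.ncard_image_of_injOn hbij.injOn
  rw [hbij.image_eq] at this
  rw [← this, Set.ncard_univ, Nat.card_eq_fintype_card]
  decide
end

section
/- For the Mermin scenario with β ≡ 0 on rows and β ≡ 1 on columns, there is no assignment s : M → ℤ_2 with Σ_{m ∈ C} s(m) = β(C) for all 6 contexts C; i.e., the Mermin square with odd β has no classical solution. -/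
/-- The Mermin square with β = 0 on rows and β = 1 on columns has no
classical solution. -/
theorem stmt12 :
    ¬ ∃ s : Fin 3 × Fin 3 → ZMod 2,
        (∀ i : Fin 3, s (i, 0) + s (i, 1) + s (i, 2) = 0) ∧
        (∀ j : Fin 3, s (0, j) + s (1, j) + s (2, j) = 1) := by
  rintro ⟨s, hr, hc⟩
  have h0 := hr 0; have h1 := hr 1; have h2 := hr 2
  have c0 := hc 0; have c1 := hc 1; have c2 := hc 2
  have : (0 : ZMod 2) = 1 := by
    calc (0 : ZMod 2) = (s (0,0) + s (0,1) + s (0,2)) + (s (1,0) + s (1,1) + s (1,2))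
        + (s (2,0) + s (2,1) + s (2,2)) := by rw [h0, h1, h2]; ring
      _ = (s (0,0) + s (1,0) + s (2,0)) + (s (0,1) + s (1,1) + s (2,1))
        + (s (0,2) + s (1,2) + s (2,2)) := by ring
      _ = 1 := by rw [c0, c1, c2]; decide
  exact absurd this (by decide)
end
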